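/- arXiv:1805.03065 — 6 statements merged into one kernel-verified Lean document; each statement's English description precedes it below -/
import Mathlib

section
/- Let Ω ⊂ ℝ^k be an open convex cone not containing any affine line. Then the isotropy subgroup G_x(Ω) = {A ∈ GL_k(ℝ) : AΩ = Ω, Ax = x} of any point x ∈ Ω is compact. -/
open Set Metric Bornology Matrix Filter Topology Pointwise

/-!
Since `Ω` contains no line, its closure is a salient cone, and comparing `u / ‖u‖` with
`(x - u) / ‖u‖` on the compact unit sphere shows that `Ω ∩ (x - Ω)` is bounded. This set contains a
ball around `x / 2` and is mapped into itself by every linear map that fixes `x` and maps `Ω` into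
`Ω`, so these maps form a bounded set of operators. The set is also closed: a map fixing `x` that
sends `Ω` into its closure sends `Ω` into `Ω`, because `A y = ε x + A (y - ε x)` with `y - ε x ∈ Ω`.
So it is compact, and `G_x(Ω)` consists of its elements whose inverse also lies in it, a closed
condition.
-/

namespace ConvexCone

variable {E : Type*} [NormedAddCommGroup E] [NormedSpace ℝ E] {C : ConvexCone ℝ E}

lemma add_mem_of_mem_closure (hC : IsOpen (C : Set E)) {y c : E} (hy : y ∈ C)
    (hc : c ∈ closure (C : Set E)) : y + c ∈ C := by
  obtain ⟨a, ha, b, hb, hab⟩ : y + c ∈ (C : Set E) + (C : Set E) :=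
    hC.add_closure (C : Set E) ▸ add_mem_add hy hc
  exact hab ▸ C.add_mem ha hb

lemma salient_closure_of_not_exists_line (hC : IsOpen (C : Set E))
    (hline : ¬ ∃ x v : E, v ≠ 0 ∧ ∀ t : ℝ, x + t • v ∈ C) : C.closure.Salient := by
  intro w hw hw0 hnw
  obtain ⟨x, hx⟩ := closure_nonempty_iff.1 ⟨w, hw⟩
  refine hline ⟨x, w, hw0, fun t => ?_⟩
  rcases lt_trichotomy t 0 with ht | rfl | ht
  · rw [← neg_smul_neg]
    exact add_mem_of_mem_closure hC hx (C.closure.smul_mem (neg_pos.2 ht) hnw)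
  · simpa using hx
  · exact add_mem_of_mem_closure hC hx (C.closure.smul_mem ht hw)

lemma Salient.exists_pos_le_norm_add [ProperSpace E] {D : ConvexCone ℝ E}
    (hD : IsClosed (D : Set E)) (hs : D.Salient) :
    ∃ δ > 0, ∀ a ∈ D, ∀ b ∈ D, ‖a‖ = 1 → δ ≤ ‖a + b‖ := by
  have hdisj : Disjoint ((D : Set E) ∩ sphere 0 1) (-(D : Set E)) := by
    refine Set.disjoint_left.2 fun a ⟨ha, ha1⟩ hna => hs a ha ?_ hna
    exact ne_zero_of_mem_unit_sphere ⟨a, ha1⟩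
  obtain ⟨r, hr, hsep⟩ :=
    exists_pos_forall_lt_edist ((isCompact_sphere 0 1).inter_left hD) hD.neg hdisj
  refine ⟨r, hr, fun a ha b hb ha1 => ?_⟩
  have := hsep a ⟨ha, by simpa using ha1⟩ (-b) (by simpa using hb)
  rw [edist_nndist, ENNReal.coe_lt_coe, ← NNReal.coe_lt_coe, coe_nndist, dist_eq_norm,
    sub_neg_eq_add] at this
  exact this.le

lemma isBounded_setOf_mem_and_sub_mem [FiniteDimensional ℝ E] (hs : C.closure.Salient) (x : E) :
    IsBounded {u | u ∈ C ∧ x - u ∈ C} := by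
  obtain ⟨δ, hδ, hsep⟩ := hs.exists_pos_le_norm_add isClosed_closure
  refine isBounded_iff_forall_norm_le.2 ⟨‖x‖ / δ, fun u ⟨hu, hxu⟩ => ?_⟩
  rcases eq_or_ne u 0 with rfl | hu0
  · simpa using by positivity
  have hn : 0 < ‖u‖ := norm_pos_iff.2 hu0
  have key := hsep (‖u‖⁻¹ • u) (C.closure.smul_mem (inv_pos.2 hn) (subset_closure hu))
    (‖u‖⁻¹ • (x - u)) (C.closure.smul_mem (inv_pos.2 hn) (subset_closure hxu))
    (by rw [norm_smul, norm_inv, norm_norm, inv_mul_cancel₀ hn.ne'])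
  rw [← smul_add, add_sub_cancel, norm_smul, norm_inv, norm_norm] at key
  rw [le_div_iff₀ hδ]
  calc ‖u‖ * δ ≤ ‖u‖ * (‖u‖⁻¹ * ‖x‖) := by gcongr
    _ = ‖x‖ := by field_simp

lemma mapsTo_of_mapsTo_closure (hC : IsOpen (C : Set E)) {x : E} (hx : x ∈ C) {f : E →ₗ[ℝ] E}
    (hfx : f x = x) (hf : MapsTo f C (closure C)) : MapsTo f C C := by
  intro y hy
  have hev : ∀ᶠ ε in 𝓝[>] (0 : ℝ), y - ε • x ∈ C := by
    have : Tendsto (fun ε : ℝ => y - ε • x) (𝓝 0) (𝓝 y) := by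
      simpa using (tendsto_const_nhds (x := y)).sub ((tendsto_id (x := 𝓝 (0 : ℝ))).smul_const x)
    exact nhdsWithin_le_nhds (this.eventually (hC.mem_nhds hy))
  obtain ⟨ε, hyε, hε⟩ := (hev.and self_mem_nhdsWithin).exists
  have hsplit : f y = ε • x + f (y - ε • x) := by
    rw [map_sub, map_smul, hfx]
    abel
  rw [hsplit]
  exact add_mem_of_mem_closure hC (C.smul_mem hε hx) (hf hyε)

end ConvexCone

section OperatorBounds

variable {𝕜 E F : Type*} [NontriviallyNormedField 𝕜] [SeminormedAddCommGroup E]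
  [SeminormedAddCommGroup F] [NormedSpace 𝕜 E] [NormedSpace 𝕜 F]

lemma ContinuousLinearMap.opNorm_le_of_ball_bound {f : E →L[𝕜] F} {r M : ℝ} {c : 𝕜}
    (hc : 1 < ‖c‖) (hr : 0 < r) (hM : 0 ≤ M) (hf : ∀ v ∈ ball (0 : E) r, ‖f v‖ ≤ M) :
    ‖f‖ ≤ M * ‖c‖ / r := by
  have hc0 : 0 < ‖c‖ := one_pos.trans hc
  refine f.opNorm_le_of_shell hr (by positivity) hc fun v hv hvr => ?_
  calc ‖f v‖ ≤ M := hf v (mem_ball_zero_iff.2 hvr)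
    _ = M * ‖c‖ / r * (r / ‖c‖) := by field_simp
    _ ≤ M * ‖c‖ / r * ‖v‖ := by gcongr

lemma isBounded_setOf_mapsTo {U : Set E} (hU : IsBounded U) {p : E} {r : ℝ} (hr : 0 < r)
    (hpU : ball p r ⊆ U) : IsBounded {f : E →L[𝕜] E | MapsTo f U U} := by
  obtain ⟨R, hR⟩ := isBounded_iff_forall_norm_le.1 hU
  obtain ⟨c, hc⟩ := NormedField.exists_one_lt_norm 𝕜
  have hp : p ∈ U := hpU (mem_ball_self hr)
  have hR0 : 0 ≤ R := (norm_nonneg p).trans (hR p hp)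
  refine isBounded_iff_forall_norm_le.2 ⟨2 * R * ‖c‖ / r, fun f hf => ?_⟩
  refine ContinuousLinearMap.opNorm_le_of_ball_bound hc hr (by positivity) fun v hv => ?_
  have hpv : p + v ∈ U := hpU (by simpa using hv)
  calc ‖f v‖ = ‖f (p + v) - f p‖ := by rw [map_add, add_sub_cancel_left]
    _ ≤ ‖f (p + v)‖ + ‖f p‖ := norm_sub_le _ _
    _ ≤ 2 * R := by linarith [hR _ (hf hpv), hR _ (hf hp)]

end OperatorBounds

theorem ConvexCone.isCompact_setOf_apply_eq_and_mapsTo {E : Type*} [NormedAddCommGroup E]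
    [NormedSpace ℝ E] [FiniteDimensional ℝ E] {C : ConvexCone ℝ E} (hC : IsOpen (C : Set E))
    (hs : C.closure.Salient) {x : E} (hx : x ∈ C) :
    IsCompact {f : E →L[ℝ] E | f x = x ∧ MapsTo f C C} := by
  have hclosed : IsClosed {f : E →L[ℝ] E | f x = x ∧ MapsTo f C C} := by
    have : {f : E →L[ℝ] E | f x = x ∧ MapsTo f C C} =
        {f | f x = x} ∩ ⋂ y ∈ (C : Set E), {f | f y ∈ closure (C : Set E)} := by
      ext f
      simp only [mem_ofPred_eq, mem_inter_iff, mem_iInter]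
      exact and_congr_right fun hfx => ⟨fun hf y hy => subset_closure (hf hy),
        C.mapsTo_of_mapsTo_closure hC hx (f := (f : E →ₗ[ℝ] E)) hfx⟩
    rw [this]
    exact (isClosed_eq (continuous_eval_const x) continuous_const).inter
      (isClosed_biInter fun y _ => isClosed_closure.preimage (continuous_eval_const y))
  have hU : IsOpen {u | u ∈ C ∧ x - u ∈ C} :=
    hC.inter (hC.preimage (continuous_const.sub continuous_id))
  have hp : (2 : ℝ)⁻¹ • x ∈ C := C.smul_mem (by norm_num) hx
  have hhalf : x - (2 : ℝ)⁻¹ • x = (2 : ℝ)⁻¹ • x := by module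
  obtain ⟨r, hr, hball⟩ := Metric.isOpen_iff.1 hU ((2 : ℝ)⁻¹ • x) ⟨hp, by rwa [hhalf]⟩
  refine isCompact_of_isClosed_isBounded hclosed
    ((isBounded_setOf_mapsTo (C.isBounded_setOf_mem_and_sub_mem hs x) hr hball).subset ?_)
  rintro f ⟨hfx, hf⟩ u ⟨hu, hxu⟩
  exact ⟨hf hu, by simpa [hfx] using hf hxu⟩

theorem IsCompact.setOf_exists_mem_mul_eq_one {M : Type*} [Monoid M] [TopologicalSpace M]
    [ContinuousMul M] [T2Space M] {K : Set M} (hK : IsCompact K) :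
    IsCompact {a ∈ K | ∃ b ∈ K, a * b = 1 ∧ b * a = 1} := by
  have : {a ∈ K | ∃ b ∈ K, a * b = 1 ∧ b * a = 1} =
      Prod.fst '' (K ×ˢ K ∩ {p | p.1 * p.2 = 1 ∧ p.2 * p.1 = 1}) := by
    ext a
    simp [and_assoc]
  rw [this]
  exact ((hK.prod hK).inter_right ((isClosed_eq (by fun_prop) continuous_const).inter
    (isClosed_eq (by fun_prop) continuous_const))).image continuous_fst

lemma Matrix.setOf_isUnit_and_image_eq_and_mulVec_eq {n R : Type*} [Fintype n] [DecidableEq n]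
    [CommRing R] (Ω : Set (n → R)) (x : n → R) :
    {A : Matrix n n R | IsUnit A ∧ A.mulVec '' Ω = Ω ∧ A.mulVec x = x} =
      {A ∈ {A : Matrix n n R | A *ᵥ x = x ∧ MapsTo A.mulVec Ω Ω} |
        ∃ B ∈ {B : Matrix n n R | B *ᵥ x = x ∧ MapsTo B.mulVec Ω Ω}, A * B = 1 ∧ B * A = 1} := by
  ext A
  simp only [mem_ofPred_eq]
  constructor
  · rintro ⟨hA, himg, hAx⟩
    obtain ⟨B, hAB, hBA⟩ := isUnit_iff_exists.1 hA
    have hBA_apply : ∀ y, B *ᵥ (A *ᵥ y) = y := fun y => by rw [mulVec_mulVec, hBA, one_mulVec]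
    refine ⟨⟨hAx, fun y hy => himg.subset (mem_image_of_mem _ hy)⟩, B,
      ⟨by rw [← hAx, hBA_apply, hAx], ?_⟩, hAB, hBA⟩
    rintro _ hy
    rw [← himg] at hy
    obtain ⟨z, hz, rfl⟩ := hy
    rwa [hBA_apply]
  · rintro ⟨⟨hAx, hA⟩, B, ⟨-, hB⟩, hAB, hBA⟩
    refine ⟨isUnit_iff_exists.2 ⟨B, hAB, hBA⟩, hA.image_subset.antisymm fun y hy => ?_, hAx⟩
    exact ⟨B *ᵥ y, hB hy, by rw [mulVec_mulVec, hAB, one_mulVec]⟩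

theorem stmt_0_general (k : ℕ) (Ω : Set (Fin k → ℝ)) (hΩopen : IsOpen Ω)
    (hcone : ∀ x ∈ Ω, ∀ y ∈ Ω, ∀ a b : ℝ, 0 < a → 0 < b → a • x + b • y ∈ Ω)
    (hline : ¬ ∃ x v : Fin k → ℝ, v ≠ 0 ∧ ∀ t : ℝ, x + t • v ∈ Ω)
    (x : Fin k → ℝ) (hx : x ∈ Ω) :
    IsCompact {A : Matrix (Fin k) (Fin k) ℝ |
      IsUnit A ∧ A.mulVec '' Ω = Ω ∧ A.mulVec x = x} := by
  let C : ConvexCone ℝ (Fin k → ℝ) :=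
    { carrier := Ω
      smul_mem' := fun c hc y hy => by
        simpa [← add_smul] using hcone y hy y hy (c / 2) (c / 2) (by positivity) (by positivity)
      add_mem' := fun y hy z hz => by simpa using hcone y hy z hz 1 1 one_pos one_pos }
  let Φ : Matrix (Fin k) (Fin k) ℝ ≃L[ℝ] ((Fin k → ℝ) →L[ℝ] (Fin k → ℝ)) :=
    (Matrix.toLin'.trans LinearMap.toContinuousLinearMap).toContinuousLinearEquiv
  have hK : IsCompact {A : Matrix (Fin k) (Fin k) ℝ | A *ᵥ x = x ∧ MapsTo A.mulVec Ω Ω} :=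
    Φ.toHomeomorph.isCompact_preimage.2 <| C.isCompact_setOf_apply_eq_and_mapsTo hΩopen
      (C.salient_closure_of_not_exists_line hΩopen hline) hx
  rw [Matrix.setOf_isUnit_and_image_eq_and_mulVec_eq]
  exact hK.setOf_exists_mem_mul_eq_one

/-- The isotropy subgroup of a point of an open convex cone containing no
affine line is compact (as a set of matrices). -/
theorem stmt_0 (k : ℕ) (Ω : Set (Fin k → ℝ)) (hΩopen : IsOpen Ω) (hne : Ω.Nonempty)
    (hcone : ∀ x ∈ Ω, ∀ y ∈ Ω, ∀ a b : ℝ, 0 < a → 0 < b → a • x + b • y ∈ Ω)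
    (hline : ¬ ∃ x v : Fin k → ℝ, v ≠ 0 ∧ ∀ t : ℝ, x + t • v ∈ Ω)
    (x : Fin k → ℝ) (hx : x ∈ Ω) :
    IsCompact {A : Matrix (Fin k) (Fin k) ℝ |
      IsUnit A ∧ A.mulVec '' Ω = Ω ∧ A.mulVec x = x} :=
  stmt_0_general k Ω hΩopen hcone hline x hx
end

section
/- Let H be an r×r Hermitian matrix and let K = {B ∈ 𝔤𝔩_r(ℂ) : Bᵀ + conj(B) = 0 and Bᵀ H + H conj(B) = 0} be the space of skew-Hermitian matrices that are also skew-Hermitian with respect to H. Then dim_ℝ K = r² − 2p, where p is the number of pairs (i,j) with i < j such that the i-th and j-th eigenvalues of H are distinct (counted with multiplicity as a multiset of eigenvalues). -/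
/-!
Write `V` for the entrywise conjugate of `B`, so that `Bᵀ = Vᴴ`. The two conditions then say that
`V` is skew-Hermitian and commutes with `H`. Conjugating by the unitary `U` preserves both
properties and turns `H` into `diagonal μ`, and a matrix commutes with `diagonal μ` exactly when it
vanishes at the pairs `(i, j)` with `μ i ≠ μ j`. A skew-Hermitian `W` has antisymmetric real part
and symmetric imaginary part, so it is determined by the real matrix `re W + im W`; hence the
skew-Hermitian matrices supported on `{(i, j) | μ i = μ j}` form a real space of dimension
`#{(i, j) | μ i = μ j} = r² - 2p`.
-/

open Matrix Module

theorem add_eq_zero_and_mul_add_mul_eq_zero_iff {R : Type*} [Ring R] {a v h : R} :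
    a + v = 0 ∧ a * h + h * v = 0 ↔ a = -v ∧ Commute h v := by
  rw [add_eq_zero_iff_eq_neg]
  refine and_congr_right fun ha => ?_
  rw [ha, neg_mul, neg_add_eq_zero, commute_iff_eq, eq_comm]

section PairCount

variable {α β : Type*} [Fintype α] [LinearOrder α]

theorem card_pairs_apply_ne (f : α → β) :
    Nat.card {p : α × α // f p.1 ≠ f p.2} =
      2 * Nat.card {p : α × α // p.1 < p.2 ∧ f p.1 ≠ f p.2} := by
  classical
  simp only [Nat.card_eq_fintype_card, Fintype.card_subtype]
  rw [← Finset.card_filter_add_card_filter_not (fun p : α × α => p.1 < p.2),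
    Finset.filter_filter, Finset.filter_filter, two_mul]
  congr 1
  · simp only [and_comm]
  · refine Finset.card_nbij' Prod.swap Prod.swap ?_ ?_ (fun _ _ => rfl) (fun _ _ => rfl) <;>
      rintro ⟨a, b⟩ <;>
      simp only [Finset.coe_filter, Finset.mem_univ, true_and, Set.mem_ofPred_eq, Prod.fst_swap,
        Prod.snd_swap, not_lt]
    · exact fun ⟨hf, hle⟩ => ⟨hle.lt_of_ne (by rintro rfl; exact hf rfl), hf.symm⟩
    · exact fun ⟨hlt, hf⟩ => ⟨hf.symm, hlt.le⟩

theorem card_pairs_apply_eq (f : α → β) :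
    Nat.card {p : α × α // f p.1 = f p.2} =
      Nat.card α ^ 2 - 2 * Nat.card {p : α × α // p.1 < p.2 ∧ f p.1 ≠ f p.2} := by
  classical
  rw [← card_pairs_apply_ne]
  simp only [Nat.card_eq_fintype_card, Fintype.card_subtype_compl, Fintype.card_prod, sq]
  have hle := Fintype.card_subtype_le (fun p : α × α => f p.1 = f p.2)
  rw [Fintype.card_prod] at hle
  omega

end PairCount

namespace Matrix

variable {n : Type*}

theorem commute_diagonal_iff [Fintype n] [DecidableEq n] {K : Type*} [Field K] (d : n → K)
    (W : Matrix n n K) : Commute (diagonal d) W ↔ ∀ i j, d i ≠ d j → W i j = 0 := by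
  simp only [commute_iff_eq, ← Matrix.ext_iff, diagonal_mul, mul_diagonal]
  refine forall₂_congr fun i j => ⟨fun h hne => ?_, fun h => ?_⟩
  · have : (d i - d j) * W i j = 0 := by rw [sub_mul, h, mul_comm, sub_self]
    exact (mul_eq_zero.mp this).resolve_left (sub_ne_zero.mpr hne)
  · by_cases hd : d i = d j
    · rw [hd, mul_comm]
    · rw [h hd, mul_zero, zero_mul]

theorem conjTranspose_map_conj (B : Matrix n n ℂ) : (B.map (starRingEnd ℂ))ᴴ = Bᵀ := by
  ext; simp

theorem apply_eq_neg_conj_of_conjTranspose_eq_neg {W : Matrix n n ℂ} (hW : Wᴴ = -W)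
    (i j : n) : W j i = -starRingEnd ℂ (W i j) := by
  rw [← neg_eq_iff_eq_neg.mpr (congrFun₂ hW i j)]
  simp

def skewHermitianSupportedOn (S : n → n → Prop) : Submodule ℝ (Matrix n n ℂ) where
  carrier := {W | Wᴴ = -W ∧ ∀ i j, ¬ S i j → W i j = 0}
  add_mem' := by
    rintro A B ⟨hA, hA'⟩ ⟨hB, hB'⟩
    exact ⟨by rw [conjTranspose_add, hA, hB, neg_add],
      fun i j h => by simp [hA' i j h, hB' i j h]⟩
  zero_mem' := ⟨by simp, fun _ _ _ => rfl⟩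
  smul_mem' := by
    rintro c A ⟨hA, hA'⟩
    exact ⟨by rw [conjTranspose_smul, hA, star_trivial, smul_neg], fun i j h => by simp [hA' i j h]⟩

theorem mem_skewHermitianSupportedOn {S : n → n → Prop} {W : Matrix n n ℂ} :
    W ∈ skewHermitianSupportedOn S ↔ Wᴴ = -W ∧ ∀ i j, ¬ S i j → W i j = 0 := Iff.rfl

noncomputable def skewHermitianSupportedOnEquiv (S : n → n → Prop) [Std.Symm S] :
    skewHermitianSupportedOn S ≃ₗ[ℝ] ({p : n × n // S p.1 p.2} → ℝ) where
  toFun W p := (W.1 p.1.1 p.1.2).re + (W.1 p.1.1 p.1.2).im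
  map_add' _ _ := by
    ext
    simp only [Submodule.coe_add, add_apply, Complex.add_re, Complex.add_im, Pi.add_apply]
    ring
  map_smul' _ _ := by
    ext
    simp only [SetLike.val_smul, smul_apply, Complex.real_smul, Complex.mul_re, Complex.ofReal_re,
      Complex.ofReal_im, zero_mul, sub_zero, Complex.mul_im, add_zero, Real.ringHom_apply,
      Pi.smul_apply, smul_eq_mul]
    ring
  invFun f := open Classical in ⟨of fun i j =>
      if h : S i j then
        ⟨(f ⟨(i, j), h⟩ - f ⟨(j, i), symm h⟩) / 2, (f ⟨(i, j), h⟩ + f ⟨(j, i), symm h⟩) / 2⟩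
      else 0, by
    refine ⟨Matrix.ext fun i j => ?_, fun i j h => dif_neg h⟩
    by_cases h : S j i
    · simp only [conjTranspose_apply, neg_apply, of_apply, dif_pos h, dif_pos (symm h)]
      apply Complex.ext <;> simp only [Complex.star_def, Complex.conj_re, Complex.conj_im,
        Complex.neg_re, Complex.neg_im] <;> ring
    · simp [dif_neg h, dif_neg (fun h' => h (symm h'))]⟩
  left_inv W := by
    obtain ⟨W, hW, hW'⟩ := W
    ext i j
    dsimp only [of_apply]
    split_ifs with h
    · rw [apply_eq_neg_conj_of_conjTranspose_eq_neg hW i j]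
      apply Complex.ext <;> simp only [Complex.conj_re, Complex.conj_im, Complex.neg_re,
        Complex.neg_im] <;> ring
    · exact (hW' i j h).symm
  right_inv f := by
    ext ⟨⟨i, j⟩, h⟩
    simp only [of_apply, dif_pos h]
    ring

theorem finrank_skewHermitianSupportedOn [Finite n] (S : n → n → Prop) [Std.Symm S] :
    finrank ℝ (skewHermitianSupportedOn S) = Nat.card {p : n × n // S p.1 p.2} := by
  have := Fintype.ofFinite n
  classical
  rw [(skewHermitianSupportedOnEquiv S).finrank_eq, finrank_fintype_fun_eq_card,
    Nat.card_eq_fintype_card]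

theorem star_mul_mul_mem_skewHermitianSupportedOn_iff [Fintype n] [DecidableEq n]
    {U H : Matrix n n ℂ} (hU : U ∈ unitaryGroup n ℂ) {μ : n → ℝ}
    (hH : H = U * diagonal (fun i => (μ i : ℂ)) * star U) (V : Matrix n n ℂ) :
    star U * V * U ∈ skewHermitianSupportedOn (fun i j => μ i = μ j) ↔
      Vᴴ = -V ∧ Commute H V := by
  set φ := Unitary.conjStarAlgAut ℝ _ (star ⟨U, hU⟩)
  have hφ (X : Matrix n n ℂ) : φ X = star U * X * U := Unitary.conjStarAlgAut_star_apply _ _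
  have hφH : φ H = diagonal (fun i => (μ i : ℂ)) := by
    have hUU : star U * U = 1 := mem_unitaryGroup_iff'.mp hU
    rw [hφ, hH, Matrix.mul_assoc, Matrix.mul_assoc, hUU, Matrix.mul_one, ← Matrix.mul_assoc, hUU,
      Matrix.one_mul]
  rw [mem_skewHermitianSupportedOn, ← hφ]
  refine and_congr ?_ ?_
  · rw [← star_eq_conjTranspose, ← star_eq_conjTranspose, ← map_star φ, ← map_neg φ,
      (EquivLike.injective φ).eq_iff]
  · rw [← commute_map_iff (EquivLike.injective φ), hφH, commute_diagonal_iff]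
    simp only [ne_eq, Complex.ofReal_inj]

end Matrix

theorem stmt_4_general (r : ℕ) (H : Matrix (Fin r) (Fin r) ℂ)
    (μ : Fin r → ℝ) (U : Matrix (Fin r) (Fin r) ℂ)
    (hU : U ∈ Matrix.unitaryGroup (Fin r) ℂ)
    (hdiag : H = U * Matrix.diagonal (fun i => (μ i : ℂ)) * star U) :
    Module.finrank ℝ (Submodule.span ℝ
      {B : Matrix (Fin r) (Fin r) ℂ |
        Bᵀ + B.map (starRingEnd ℂ) = 0 ∧
        Bᵀ * H + H * B.map (starRingEnd ℂ) = 0})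
      = r ^ 2 - 2 * Nat.card {p : Fin r × Fin r // p.1 < p.2 ∧ μ p.1 ≠ μ p.2} := by
  let Φ : Matrix (Fin r) (Fin r) ℂ ≃ₗ[ℝ] Matrix (Fin r) (Fin r) ℂ :=
    (Complex.conjAe.mapMatrix.trans
      (Unitary.conjStarAlgAut ℝ _ (star ⟨U, hU⟩)).toAlgEquiv).toLinearEquiv
  have hΦ (B : Matrix (Fin r) (Fin r) ℂ) : Φ B = star U * B.map (starRingEnd ℂ) * U := by
    simp [Φ]
  have hK : {B : Matrix (Fin r) (Fin r) ℂ |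
        Bᵀ + B.map (starRingEnd ℂ) = 0 ∧ Bᵀ * H + H * B.map (starRingEnd ℂ) = 0} =
      (skewHermitianSupportedOn fun i j => μ i = μ j).comap Φ.toLinearMap := by
    ext B
    rw [SetLike.mem_coe, Submodule.mem_comap, Set.mem_ofPred_eq, LinearEquiv.coe_coe, hΦ,
      star_mul_mul_mem_skewHermitianSupportedOn_iff hU hdiag, conjTranspose_map_conj,
      add_eq_zero_and_mul_add_mul_eq_zero_iff]
  rw [hK, Submodule.span_eq, Submodule.comap_equiv_eq_map_symm, LinearEquiv.finrank_map_eq,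
    finrank_skewHermitianSupportedOn, card_pairs_apply_eq, Nat.card_fin]

/-- If `H` is an `r × r` Hermitian matrix with eigenvalues `μ₁, …, μ_r`
(i.e. `H = U * diagonal μ * U⁻¹` for a unitary `U`), then the real vector space
`K = {B : Bᵀ + conj B = 0, Bᵀ H + H conj B = 0}` has dimension `r² - 2p`,
where `p` is the number of pairs `i < j` with `μ i ≠ μ j`. -/
theorem stmt_4 (r : ℕ) (H : Matrix (Fin r) (Fin r) ℂ) (hH : H.IsHermitian)
    (μ : Fin r → ℝ) (U : Matrix (Fin r) (Fin r) ℂ)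
    (hU : U ∈ Matrix.unitaryGroup (Fin r) ℂ)
    (hdiag : H = U * Matrix.diagonal (fun i => (μ i : ℂ)) * star U) :
    Module.finrank ℝ (Submodule.span ℝ
      {B : Matrix (Fin r) (Fin r) ℂ |
        Bᵀ + B.map (starRingEnd ℂ) = 0 ∧
        Bᵀ * H + H * B.map (starRingEnd ℂ) = 0})
      = r ^ 2 - 2 * Nat.card {p : Fin r × Fin r // p.1 < p.2 ∧ μ p.1 ≠ μ p.2} :=
  stmt_4_general r H μ U hU hdiag
end

section
/- Let G be the set of A ∈ GL₂(ℝ) with AΩ₁ = Ω₁, where Ω₁ = {x ∈ ℝ² : x₁ > 0, x₂ > 0}, such that there exists B ∈ GL_m(ℂ) with A·(‖w‖², ‖w‖²) = (‖Bw‖², ‖Bw‖²) for all w ∈ ℂ^m (i.e., A₁₁‖w‖² + A₁₂‖w‖² = ‖Bw‖² and A₂₁‖w‖² + A₂₂‖w‖² = ‖Bw‖² for all w). Then the identity component of G is {a·I₂ : a > 0}, and in particular G does not act transitively on Ω₁. -/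
/-!
Plugging `w ≠ 0` into `A (‖w‖², ‖w‖²) = (‖Bw‖², ‖Bw‖²)` shows that `A` has equal row sums, i.e.
`A` maps the diagonal of `Ω₁` into itself; so `(1, 1)` is never sent to `(1, 2)`. Since `A` and
`A⁻¹` both preserve `Ω₁`, both have nonnegative entries, which for a `2 × 2` matrix with positive
determinant forces `A` to be diagonal, hence a positive scalar by the row sum condition. The
identity component lies in `det > 0`, and it contains the connected ray of positive scalars.
-/

open Matrix

theorem Matrix.nonneg_of_mapsTo_posOrthant {ι κ : Type*} [Fintype κ] [DecidableEq κ]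
    {A : Matrix ι κ ℝ} (hA : ∀ x : κ → ℝ, (∀ j, 0 < x j) → ∀ i, 0 < (A *ᵥ x) i) (i : ι) (j : κ) :
    0 ≤ A i j := by
  -- test positivity on `e_j + ε 𝟙` and let `ε → 0⁺`
  let x : ℝ → κ → ℝ := fun ε => Pi.single j 1 + ε • 1
  have hcont : Continuous fun ε => (A *ᵥ x ε) i := by
    simp only [x, mulVec_add, mulVec_smul, Pi.add_apply, Pi.smul_apply]
    fun_prop
  have hx0 : (A *ᵥ x 0) i = A i j := by simp [x]
  have hpos : ∀ ε ∈ Set.Ioi (0 : ℝ), ∀ k, 0 < x ε k := fun ε hε k => by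
    have : 0 ≤ (Pi.single j 1 : κ → ℝ) k := by
      rw [Pi.single_apply]; split_ifs <;> norm_num
    simp only [x, Pi.add_apply, Pi.smul_apply, Pi.one_apply, smul_eq_mul, mul_one]
    linarith [hε.out]
  rw [← hx0]
  exact ge_of_tendsto (hcont.tendsto 0 |>.mono_left nhdsWithin_le_nhds)
    (eventually_nhdsWithin_of_forall fun ε hε => (hA _ (hpos ε hε) i).le)

theorem Matrix.mapsTo_inv_mulVec_of_image_eq {n R : Type*} [Fintype n] [DecidableEq n]
    [CommRing R] {A : Matrix n n R} (hA : IsUnit A) {S : Set (n → R)} (h : (A *ᵥ ·) '' S = S) :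
    Set.MapsTo (A⁻¹ *ᵥ ·) S S := by
  intro y hy
  rw [← h] at hy
  obtain ⟨x, hx, rfl⟩ := hy
  simpa [mulVec_mulVec, nonsing_inv_mul _ ((isUnit_iff_isUnit_det A).mp hA)] using hx

theorem Matrix.fin_two_offDiag_eq_zero {A : Matrix (Fin 2) (Fin 2) ℝ} (hdet : 0 < A.det)
    (hA : ∀ i j, 0 ≤ A i j) (hA' : ∀ i j, 0 ≤ A⁻¹ i j) : A 0 1 = 0 ∧ A 1 0 = 0 := by
  have hinv : A⁻¹ = A.det⁻¹ • !![A 1 1, -A 0 1; -A 1 0, A 0 0] := by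
    rw [inv_def, adjugate_fin_two, Ring.inverse_eq_inv']
  have h01 := hA' 0 1
  have h10 := hA' 1 0
  simp only [hinv, smul_apply, of_apply, cons_val', cons_val_zero, cons_val_one, smul_eq_mul]
    at h01 h10
  have hd := inv_pos.mpr hdet
  constructor <;> nlinarith [hA 0 1, hA 1 0]

theorem Matrix.connectedComponentIn_subset_det_pos {n : Type*} [Fintype n] [DecidableEq n]
    {S : Set (Matrix n n ℝ)} (hS : ∀ M ∈ S, M.det ≠ 0) :
    connectedComponentIn S 1 ⊆ {M | 0 < M.det} := by
  intro M hM
  have h1 : (1 : Matrix n n ℝ) ∈ S := connectedComponentIn_nonempty_iff.mp ⟨M, hM⟩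
  have hpre : IsPreconnected (det '' connectedComponentIn S 1) :=
    isPreconnected_connectedComponentIn.image _ (continuous_id.matrix_det).continuousOn
  by_contra hneg
  obtain ⟨N, hN, hN0⟩ : (0 : ℝ) ∈ det '' connectedComponentIn S 1 :=
    hpre.Icc_subset (Set.mem_image_of_mem _ hM) ⟨1, mem_connectedComponentIn h1, det_one⟩
      ⟨not_lt.mp hneg, zero_le_one⟩
  exact hS N (connectedComponentIn_subset _ _ hN) hN0

theorem Matrix.rowSum_eq_of_mulVec_const {ι κ : Type*} [Fintype κ] {A : Matrix ι κ ℝ} {s t : ℝ}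
    (hs : s ≠ 0) (h : A *ᵥ (fun _ => s) = fun _ => t) (i i' : ι) :
    ∑ j, A i j = ∑ j, A i' j := by
  have hrow : ∀ i, (∑ j, A i j) * s = t := fun i => by
    simpa [mulVec, dotProduct, Finset.sum_mul] using congrFun h i
  exact mul_right_cancel₀ hs ((hrow i).trans (hrow i').symm)

def quadrant : Set (Fin 2 → ℝ) := {x | 0 < x 0 ∧ 0 < x 1}

/-- The group `G(Ω₁, H)` for `H(w, w) = (‖w‖², ‖w‖²)` on `ℂᵐ`. -/
def quadrantHermAut (m : ℕ) : Set (Matrix (Fin 2) (Fin 2) ℝ) :=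
  {A | IsUnit A ∧ A.mulVec '' quadrant = quadrant ∧
    ∃ B : Matrix (Fin m) (Fin m) ℂ, IsUnit B ∧ ∀ w : Fin m → ℂ,
      A.mulVec (fun _ => ∑ j, ‖w j‖ ^ 2) = fun _ => ∑ j, ‖B.mulVec w j‖ ^ 2}

theorem mem_quadrant_iff {x : Fin 2 → ℝ} : x ∈ quadrant ↔ ∀ i, 0 < x i := by
  simp [quadrant, Fin.forall_fin_two]

theorem Matrix.nonneg_of_mapsTo_quadrant {A : Matrix (Fin 2) (Fin 2) ℝ}
    (hA : Set.MapsTo (A *ᵥ ·) quadrant quadrant) (i j : Fin 2) : 0 ≤ A i j :=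
  nonneg_of_mapsTo_posOrthant (fun _ hx => mem_quadrant_iff.mp (hA (mem_quadrant_iff.mpr hx))) i j

theorem Matrix.eq_smul_one_of_image_quadrant {A : Matrix (Fin 2) (Fin 2) ℝ}
    (himg : (A *ᵥ ·) '' quadrant = quadrant) (hdet : 0 < A.det)
    (hrow : A 0 0 + A 0 1 = A 1 0 + A 1 1) : ∃ a : ℝ, 0 < a ∧ A = a • 1 := by
  have hunit : IsUnit A := (isUnit_iff_isUnit_det A).mpr (isUnit_iff_ne_zero.mpr hdet.ne')
  have hA := nonneg_of_mapsTo_quadrant (himg ▸ Set.mapsTo_image _ _)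
  have hA' := nonneg_of_mapsTo_quadrant (mapsTo_inv_mulVec_of_image_eq hunit himg)
  obtain ⟨h01, h10⟩ := fin_two_offDiag_eq_zero hdet hA hA'
  have h11 : A 1 1 = A 0 0 := by linarith
  have hpos : 0 < A 0 0 := by
    rw [det_fin_two, h01, h11] at hdet
    exact lt_of_le_of_ne (hA 0 0) fun h => by simp [← h] at hdet
  refine ⟨A 0 0, hpos, ?_⟩
  ext i j
  fin_cases i <;> fin_cases j <;> simp [h01, h10, h11]

theorem smul_one_mem_quadrantHermAut (m : ℕ) {a : ℝ} (ha : 0 < a) :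
    a • (1 : Matrix (Fin 2) (Fin 2) ℝ) ∈ quadrantHermAut m := by
  refine ⟨?_, ?_, (Real.sqrt a : ℂ) • 1, ?_, fun w => ?_⟩
  · simpa [isUnit_iff_isUnit_det, det_smul] using ha.ne'
  · ext y
    simp only [smul_mulVec, one_mulVec, Set.mem_image]
    constructor
    · rintro ⟨x, ⟨hx0, hx1⟩, rfl⟩
      exact ⟨mul_pos ha hx0, mul_pos ha hx1⟩
    · rintro ⟨hy0, hy1⟩
      have ha' := inv_pos.mpr ha
      exact ⟨a⁻¹ • y, ⟨mul_pos ha' hy0, mul_pos ha' hy1⟩, smul_inv_smul₀ ha.ne' y⟩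
  · simp [isUnit_iff_isUnit_det, (Real.sqrt_pos.mpr ha).ne']
  · simp only [smul_mulVec, one_mulVec]
    ext i
    simp [mul_pow, Real.sq_sqrt ha.le, Finset.mul_sum]

theorem rowSum_eq_of_mem_quadrantHermAut {m : ℕ} (hm : 1 ≤ m) {A : Matrix (Fin 2) (Fin 2) ℝ}
    (hA : A ∈ quadrantHermAut m) : A 0 0 + A 0 1 = A 1 0 + A 1 1 := by
  obtain ⟨-, -, B, -, hB⟩ := hA
  have hm0 : (∑ _j : Fin m, ‖(1 : ℂ)‖ ^ 2) ≠ 0 := by simpa using Nat.one_le_iff_ne_zero.mp hm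
  simpa [Fin.sum_univ_two] using rowSum_eq_of_mulVec_const hm0 (hB fun _ => 1) 0 1

theorem connectedComponentIn_quadrantHermAut {m : ℕ} (hm : 1 ≤ m) :
    connectedComponentIn (quadrantHermAut m) 1 =
      {A | ∃ a : ℝ, 0 < a ∧ A = a • (1 : Matrix (Fin 2) (Fin 2) ℝ)} := by
  apply subset_antisymm
  · intro A hA
    have hdet := connectedComponentIn_subset_det_pos
      (fun M hM => ((isUnit_iff_isUnit_det M).mp hM.1).ne_zero) hA
    obtain ⟨-, himg, -⟩ := connectedComponentIn_subset _ _ hA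
    exact eq_smul_one_of_image_quadrant himg hdet
      (rowSum_eq_of_mem_quadrantHermAut hm (connectedComponentIn_subset _ _ hA))
  · let ray := (fun t : ℝ => t • (1 : Matrix (Fin 2) (Fin 2) ℝ)) '' Set.Ioi 0
    have hray : IsPreconnected ray :=
      isPreconnected_Ioi.image _ (continuous_id.smul continuous_const).continuousOn
    rintro _ ⟨a, ha, rfl⟩
    refine hray.subset_connectedComponentIn ⟨1, Set.mem_Ioi.mpr one_pos, one_smul _ _⟩ ?_
      ⟨a, ha, rfl⟩
    rintro _ ⟨t, ht, rfl⟩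
    exact smul_one_mem_quadrantHermAut m ht

theorem mulVec_const_apply_zero_eq_apply_one {m : ℕ} (hm : 1 ≤ m) {A : Matrix (Fin 2) (Fin 2) ℝ}
    (hA : A ∈ quadrantHermAut m) (t : ℝ) : (A *ᵥ fun _ => t) 0 = (A *ᵥ fun _ => t) 1 := by
  simp only [mulVec, dotProduct, Fin.sum_univ_two]
  linear_combination t * rowSum_eq_of_mem_quadrantHermAut hm hA

/-- For `Ω₁` the open first quadrant and `H(w,w) = (‖w‖², ‖w‖²)` on `ℂᵐ`, the
identity component of `G(Ω₁, H)` consists of the positive scalar matrices, and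
in particular `G(Ω₁, H)` does not act transitively on `Ω₁`. -/
theorem stmt_11 (m : ℕ) (hm : 1 ≤ m)
    (Ω₁ : Set (Fin 2 → ℝ)) (hΩ₁ : Ω₁ = {x | 0 < x 0 ∧ 0 < x 1})
    (G : Set (Matrix (Fin 2) (Fin 2) ℝ))
    (hG : G = {A | IsUnit A ∧ A.mulVec '' Ω₁ = Ω₁ ∧
      ∃ B : Matrix (Fin m) (Fin m) ℂ, IsUnit B ∧ ∀ w : Fin m → ℂ,
        A.mulVec (fun _ => ∑ j, ‖w j‖ ^ 2) = fun _ => ∑ j, ‖B.mulVec w j‖ ^ 2}) :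
    connectedComponentIn G 1 =
      {A | ∃ a : ℝ, 0 < a ∧ A = a • (1 : Matrix (Fin 2) (Fin 2) ℝ)} ∧
    ¬ ∀ x ∈ Ω₁, ∀ y ∈ Ω₁, ∃ A ∈ G, A.mulVec x = y := by
  obtain rfl : Ω₁ = quadrant := hΩ₁
  obtain rfl : G = quadrantHermAut m := hG
  refine ⟨connectedComponentIn_quadrantHermAut hm, fun htrans => ?_⟩
  obtain ⟨A, hA, hAx⟩ := htrans (fun _ => 1) ⟨one_pos, one_pos⟩ ![1, 2] ⟨one_pos, two_pos⟩
  have hdiag := mulVec_const_apply_zero_eq_apply_one hm hA 1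
  rw [hAx] at hdiag
  norm_num at hdiag
end

section
/- Let N ≥ 1 and let H̃ : ℂ^N × ℂ^N → ℂ³ be given by H̃(w, w') = (Σⱼ conj(wⱼ)w'ⱼ, Σⱼ conj(wⱼ)w'ⱼ, 0). Suppose Φ : ℂ³ → ℂ^N is a ℂ-linear map given by a matrix (φⁱⱼ) such that for every w ∈ ℂ^N the real-linear map x ↦ Im H̃(w, Φ(x)) on ℝ³ belongs to 𝔤(Ω₃) = {((λ,p,q),(p,λ,r),(q,−r,λ)) : λ,p,q,r ∈ ℝ}. Then Φ = 0. -/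
-- Testing against `w = eⱼ` and `w = i eⱼ` gives `Im aⱼ = 0` and `Re aⱼ = 0`.
theorem eq_zero_of_forall_im_sum_conj_mul_eq_zero {ι : Type*} [Fintype ι] [DecidableEq ι]
    {a : ι → ℂ} (h : ∀ w : ι → ℂ, (∑ j, (starRingEnd ℂ) (w j) * a j).im = 0) : a = 0 := by
  have h_single (j : ι) (c : ℂ) :
      ∑ k, (starRingEnd ℂ) ((Pi.single j c : ι → ℂ) k) * a k = (starRingEnd ℂ) c * a j :=
    (Fintype.sum_eq_single j fun k hk => by simp [hk]).trans (by simp)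
  funext j
  have h_im : (a j).im = 0 := by simpa [h_single] using h (Pi.single j 1)
  have h_re : (a j).re = 0 := by simpa [h_single, Complex.mul_im] using h (Pi.single j Complex.I)
  exact Complex.ext h_re h_im

theorem eq_zero_of_rows_self_self_zero_eq_lorentzMatrix {v : Fin 3 → ℝ} {l p q r : ℝ}
    (h : (Matrix.of fun (i x : Fin 3) => if i = 2 then (0 : ℝ) else v x)
      = !![l, p, q; p, l, r; q, -r, l]) : v = 0 := by
  have e (i x : Fin 3) := congrFun (congrFun h i) x
  -- The zero third row kills `l` and `q`; the symmetric `p` entries then force `v 1 = v 0`.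
  have hl : l = 0 := by simpa using (e 2 2).symm
  have hq : q = 0 := by simpa using (e 2 0).symm
  have h0 : v 0 = l := by simpa using e 0 0
  have h1 : v 1 = p := by simpa using e 0 1
  have hp : v 0 = p := by simpa using e 1 0
  have h2 : v 2 = q := by simpa using e 0 2
  funext x
  fin_cases x
  · simp [h0, hl]
  · simp [h1, ← hp, h0, hl]
  · simp [h2, hq]

theorem stmt_13_general (N : ℕ) (φ : Fin N → Fin 3 → ℂ)
    (h : ∀ w : Fin N → ℂ, ∃ l p q r : ℝ,
      (Matrix.of fun (i x : Fin 3) =>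
          if i = 2 then (0 : ℝ)
          else (∑ j, (starRingEnd ℂ) (w j) * φ j x).im)
        = !![l, p, q; p, l, r; q, -r, l]) :
    φ = 0 := by
  have h_im (x : Fin 3) (w : Fin N → ℂ) : (∑ j, (starRingEnd ℂ) (w j) * φ j x).im = 0 := by
    obtain ⟨l, p, q, r, hm⟩ := h w
    exact congrFun (eq_zero_of_rows_self_self_zero_eq_lorentzMatrix hm) x
  funext j x
  exact congrFun (eq_zero_of_forall_im_sum_conj_mul_eq_zero (h_im x)) j

/-- Let `H̃(w,w') = (∑ conj(wⱼ)w'ⱼ, ∑ conj(wⱼ)w'ⱼ, 0)` on `ℂᴺ`. If a `ℂ`-linear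
map `Φ : ℂ³ → ℂᴺ` (with matrix `φ`) is such that for every `w` the real matrix
of `x ↦ Im H̃(w, Φ(x))` lies in `𝔤(Ω₃)`, then `Φ = 0`. -/
theorem stmt_13 (N : ℕ) (hN : 1 ≤ N) (φ : Fin N → Fin 3 → ℂ)
    (h : ∀ w : Fin N → ℂ, ∃ l p q r : ℝ,
      (Matrix.of fun (i x : Fin 3) =>
          if i = 2 then (0 : ℝ)
          else (∑ j, (starRingEnd ℂ) (w j) * φ j x).im)
        = !![l, p, q; p, l, r; q, -r, l]) :
    φ = 0 :=
  stmt_13_general N φ h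
end

section
/- Let a : ℝ³ × ℝ³ → ℝ³ be a symmetric bilinear form with components a(x,x)ₗ = Σᵢⱼ aᵢⱼˡ xᵢxⱼ (aᵢⱼˡ = aⱼᵢˡ ∈ ℝ). Suppose that (1) for every fixed vector y ∈ ℝ³, the linear map x ↦ a(y,x) belongs to 𝔤(Ω₃) = {((λ,p,q),(p,λ,r),(q,−r,λ))}, and (2) the relations a₁₂ˡ = −a₁₁ˡ, a₂₂ˡ = −a₁₂ˡ, a₂₃ˡ = −a₁₃ˡ hold for l = 1,2,3. Then a(x,x) = c·((x₁−x₂)² + x₃², −(x₁−x₂)² + x₃², 2(x₁−x₂)x₃) for some constant c ∈ ℝ. In particular the space of such forms is 1-dimensional. -/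
open Matrix

/-!
Write `a_i` for the matrix of `x ↦ a(eᵢ, x)`, whose `j`-th column is `a(eᵢ, eⱼ)`.
The relations (2) say `a(e₀ + e₁, ·) = 0`, so `a(x, x)` only involves the three vectors
`a(e₀, e₀)`, `a(e₀, e₂)`, `a(e₂, e₂)`. They also force the second column of `a_0` and of `a_2`
to be minus the first, and a matrix of `𝔤(Ω₃)` with that property is pinned down by two
parameters. Since `a(e₀, e₂) = a(e₂, e₀)` is a column of both `a_0` and `a_2`, comparing the
two parametrisations leaves the single parameter `c = a(e₀, e₀)₀`.
-/

/-- `𝔤(Ω₃)`, the Lie algebra of the automorphism group of the Lorentz cone `Ω₃ ⊂ ℝ³`. -/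
def lorentzConeAlgebra : Set (Matrix (Fin 3) (Fin 3) ℝ) :=
  {M | ∃ lam p q r : ℝ, M = !![lam, p, q; p, lam, r; q, -r, lam]}

theorem cols_eq_of_mem_lorentzConeAlgebra {v : Fin 3 → Fin 3 → ℝ}
    (hv : (of fun l j => v j l) ∈ lorentzConeAlgebra) (hcol : v 1 = -v 0) :
    v 0 = ![v 0 0, -v 0 0, v 0 2] ∧ v 2 = ![v 0 2, v 0 2, v 0 0] := by
  obtain ⟨lam, p, q, r, h⟩ := hv
  obtain rfl : v = fun j l => !![lam, p, q; p, lam, r; q, -r, lam] l j :=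
    funext₂ fun j l => congrFun (congrFun h l) j
  have hp : p = -lam := by simpa using congrFun hcol 0
  have hr : r = q := by simpa using congrFun hcol 2
  subst hp hr
  constructor <;> ext l <;> fin_cases l <;> simp

theorem slice_mem_lorentzConeAlgebra (a : Fin 3 → Fin 3 → Fin 3 → ℝ)
    (h : ∀ y : Fin 3 → ℝ, (of fun l j => ∑ i, a i j l * y i) ∈ lorentzConeAlgebra)
    (i : Fin 3) : (of fun l j => a i j l) ∈ lorentzConeAlgebra := by
  obtain ⟨lam, p, q, r, hy⟩ := h (Pi.single i 1)
  refine ⟨lam, p, q, r, ?_⟩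
  rw [← hy]
  ext l j
  simp [Pi.single_apply]

theorem quadForm_eq_of_ker (a : Fin 3 → Fin 3 → Fin 3 → ℝ)
    (hsymm : ∀ i j l, a i j l = a j i l)
    (h : ∀ l, a 0 1 l = -(a 0 0 l) ∧ a 1 1 l = -(a 0 1 l) ∧ a 1 2 l = -(a 0 2 l))
    (x : Fin 3 → ℝ) :
    (fun l => ∑ i, ∑ j, a i j l * x i * x j) =
      (x 0 - x 1) ^ 2 • a 0 0 + (2 * (x 0 - x 1) * x 2) • a 0 2 + x 2 ^ 2 • a 2 2 := by
  ext l
  obtain ⟨h01, h11, h12⟩ := h l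
  simp only [Fin.sum_univ_three, Pi.add_apply, Pi.smul_apply, smul_eq_mul]
  rw [hsymm 1 0, hsymm 2 0, hsymm 2 1, h11, h12, h01]
  ring

/-- A symmetric bilinear form `a : ℝ³ × ℝ³ → ℝ³` such that every `a(y, ·)` lies
in `𝔤(Ω₃)` and which satisfies the relations `a₁₂ˡ = -a₁₁ˡ`, `a₂₂ˡ = -a₁₂ˡ`,
`a₂₃ˡ = -a₁₃ˡ` is a scalar multiple of
`((x₁-x₂)² + x₃², -(x₁-x₂)² + x₃², 2(x₁-x₂)x₃)`. -/
theorem stmt_14 (a : Fin 3 → Fin 3 → Fin 3 → ℝ)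
    (hsymm : ∀ i j l, a i j l = a j i l)
    (h1 : ∀ y : Fin 3 → ℝ, ∃ lam p q r : ℝ,
      (Matrix.of fun (l j : Fin 3) => ∑ i, a i j l * y i)
        = !![lam, p, q; p, lam, r; q, -r, lam])
    (h2 : ∀ l, a 0 1 l = -(a 0 0 l) ∧ a 1 1 l = -(a 0 1 l) ∧ a 1 2 l = -(a 0 2 l)) :
    ∃ c : ℝ, ∀ x : Fin 3 → ℝ,
      (fun l => ∑ i, ∑ j, a i j l * x i * x j) =
        ![c * ((x 0 - x 1) ^ 2 + (x 2) ^ 2),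
          c * (-(x 0 - x 1) ^ 2 + (x 2) ^ 2),
          c * (2 * (x 0 - x 1) * x 2)] := by
  have hmem := slice_mem_lorentzConeAlgebra a h1
  obtain ⟨h00, h02⟩ := cols_eq_of_mem_lorentzConeAlgebra (hmem 0) (funext fun l => (h2 l).1)
  obtain ⟨h20, h22⟩ := cols_eq_of_mem_lorentzConeAlgebra (hmem 2)
    (funext fun l => by rw [Pi.neg_apply, hsymm 2 1, hsymm 2 0, (h2 l).2.2])
  have hcross : ![a 0 0 2, a 0 0 2, a 0 0 0] = ![a 2 0 0, -a 2 0 0, a 2 0 2] :=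
    h02.symm.trans ((funext (hsymm 0 2)).trans h20)
  simp only [Matrix.vecCons_inj] at hcross
  obtain ⟨e0, e1, e2, -⟩ := hcross
  have hq : a 0 0 2 = 0 := by linarith
  have hs : a 2 0 0 = 0 := by linarith
  rw [hq] at h00 h02
  rw [hs, ← e2] at h22
  refine ⟨a 0 0 0, fun x => ?_⟩
  rw [quadForm_eq_of_ker a hsymm h2, h00, h02, h22]
  ext l
  fin_cases l <;> simp <;> ring
end

section
/- Let v = (1,1,0) and define H(w,w') = v·(conj(w₁)w'₁ + conj(w₂)w'₂) giving the Hermitian form H(w,w) = (|w₁|²+|w₂|², |w₁|²+|w₂|², 0) on ℂ². The subgroup G(Ω₃, H) = {A ∈ GL₃(ℝ) : AΩ₃ = Ω₃ and ∃B ∈ GL₂(ℂ), AH(w,w') = H(Bw,Bw') ∀w,w'} has dimension 3, and G(Ω₃, H) acts transitively on the Lorentz cone Ω₃ = {x ∈ ℝ³ : x₁² − x₂² − x₃² > 0, x₁ > 0}. -/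
/-!
If `g ∈ GL₃(ℝ)` maps `Ω₃` onto itself and `g v = κ v` with `κ > 0`, then
`g · H(w, w') = H(√κ w, √κ w')`, so `g ∈ G(Ω₃, H)`. This ray stabiliser contains the positive
homotheties, the boosts in the `(x₀, x₁)`-plane and the null rotations fixing `v`. In the
light-cone coordinates `(x₀ - x₁, x₀ + x₁, x₂)` all three act triangularly and scale the
Lorentz form and `x₀ - x₁` by positive factors, and a product of one of each carries
`e₀ = (1, 0, 0)` to any prescribed point of `Ω₃`; transitivity follows.

Infinitesimally, `A · H = H(B ·, ·) + H(·, B ·)` holds for some `B` iff `A v ∈ ℝ v`, which for the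
matrices of `g` means `q = r`; what remains is the three-parameter family
`λ · 1 + p · K + q · N`, with `K` and `N` the generators of the boosts and null rotations.
-/

open Matrix

section RankOneHermitianForm

variable {ι κ : Type*} [Fintype κ]

def rankOneHermitianForm (v : ι → ℝ) (w w' : κ → ℂ) : ι → ℂ :=
  fun i => (star w ⬝ᵥ w') * v i

theorem sum_mul_rankOneHermitianForm [Fintype ι] (A : Matrix ι ι ℝ) (v : ι → ℝ)
    (w w' : κ → ℂ) :
    (fun l => ∑ i, (A l i : ℂ) * rankOneHermitianForm v w w' i) =
      rankOneHermitianForm (A *ᵥ v) w w' := by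
  ext l
  simp only [rankOneHermitianForm, mulVec, dotProduct, Complex.ofReal_sum, Complex.ofReal_mul,
    Finset.mul_sum]
  exact Finset.sum_congr rfl fun i _ => by ring

theorem rankOneHermitianForm_smul_eq_add (v : ι → ℝ) (w w' : κ → ℂ) (μ : ℝ) :
    rankOneHermitianForm (μ • v) w w' =
      rankOneHermitianForm v ((μ / 2 : ℂ) • w) w' +
        rankOneHermitianForm v w ((μ / 2 : ℂ) • w') := by
  ext i
  simp only [rankOneHermitianForm, star_smul, smul_dotProduct, dotProduct_smul, Pi.add_apply,
    Pi.smul_apply, smul_eq_mul, Complex.ofReal_mul, star_div₀, RCLike.star_def,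
    Complex.conj_ofReal, star_ofNat]
  ring

theorem rankOneHermitianForm_smul_eq_sqrt_smul (v : ι → ℝ) (w w' : κ → ℂ) {c : ℝ}
    (hc : 0 ≤ c) :
    rankOneHermitianForm (c • v) w w' =
      rankOneHermitianForm v ((√c : ℂ) • w) ((√c : ℂ) • w') := by
  ext i
  simp only [rankOneHermitianForm, star_smul, smul_dotProduct, dotProduct_smul,
    Pi.smul_apply, smul_eq_mul, Complex.ofReal_mul, Complex.star_def, Complex.conj_ofReal]
  have hsq : (√c : ℂ) * √c = c := by exact_mod_cast Real.mul_self_sqrt hc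
  linear_combination (-(star w ⬝ᵥ w') * v i) * hsq

theorem eq_smul_of_rankOneHermitianForm_eq_add [DecidableEq κ] {u v : ι → ℝ}
    {B : Matrix κ κ ℂ} (j : κ)
    (h : rankOneHermitianForm u (Pi.single j 1) (Pi.single j 1) =
      rankOneHermitianForm v (B *ᵥ Pi.single j 1) (Pi.single j 1) +
        rankOneHermitianForm v (Pi.single j 1) (B *ᵥ Pi.single j 1)) :
    u = (2 * (B j j).re) • v := by
  ext i
  have hi := congrFun h i
  simp only [rankOneHermitianForm, Pi.star_single, star_one, dotProduct_single,
    Pi.single_eq_same, mul_one, one_mul, mulVec_single, MulOpposite.op_one, one_smul,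
    Pi.add_apply, Pi.star_apply, col_apply, RCLike.star_def, single_dotProduct] at hi
  have hre : (starRingEnd ℂ) (B j j) + B j j = ((2 * (B j j).re : ℝ) : ℂ) := by
    rw [add_comm, Complex.add_conj]
  rw [← add_mul, hre, ← Complex.ofReal_mul] at hi
  exact_mod_cast hi

theorem exists_derivation_iff_mulVec_eq_smul [Fintype ι] [DecidableEq κ] [Nonempty κ]
    (A : Matrix ι ι ℝ) (v : ι → ℝ) :
    (∃ B : Matrix κ κ ℂ, ∀ w w' : κ → ℂ,
      (fun l => ∑ i, (A l i : ℂ) * rankOneHermitianForm v w w' i) =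
        rankOneHermitianForm v (B *ᵥ w) w' + rankOneHermitianForm v w (B *ᵥ w')) ↔
      ∃ μ : ℝ, A *ᵥ v = μ • v := by
  simp only [sum_mul_rankOneHermitianForm]
  constructor
  · rintro ⟨B, hB⟩
    exact ⟨_, eq_smul_of_rankOneHermitianForm_eq_add (Classical.arbitrary κ) (hB _ _)⟩
  · rintro ⟨μ, hμ⟩
    refine ⟨(μ / 2 : ℂ) • 1, fun w w' => ?_⟩
    simp only [hμ, smul_mulVec, one_mulVec, rankOneHermitianForm_smul_eq_add]

theorem exists_isUnit_of_mulVec_eq_smul [Fintype ι] [DecidableEq κ] {A : Matrix ι ι ℝ}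
    {v : ι → ℝ} {c : ℝ} (hc : 0 < c) (hA : A *ᵥ v = c • v) :
    ∃ B : Matrix κ κ ℂ, IsUnit B ∧ ∀ w w' : κ → ℂ,
      (fun l => ∑ i, (A l i : ℂ) * rankOneHermitianForm v w w' i) =
        rankOneHermitianForm v (B *ᵥ w) (B *ᵥ w') := by
  refine ⟨(√c : ℂ) • 1, ?_, fun w w' => ?_⟩
  · have hsqrt : (√c : ℂ) ≠ 0 := by exact_mod_cast (Real.sqrt_pos.mpr hc).ne'
    simp [isUnit_iff_isUnit_det, hsqrt]
  · rw [sum_mul_rankOneHermitianForm, hA, rankOneHermitianForm_smul_eq_sqrt_smul _ _ _ hc.le,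
      smul_mulVec, smul_mulVec, one_mulVec, one_mulVec]

end RankOneHermitianForm

section RayConeStabilizer

variable {n : Type*} [Fintype n] [DecidableEq n]

def rayConeStabilizer (Ω : Set (n → ℝ)) (v : n → ℝ) : Subgroup (GL n ℝ) where
  carrier := {U | (U : Matrix n n ℝ).mulVec '' Ω = Ω ∧
    ∃ c : ℝ, 0 < c ∧ (U : Matrix n n ℝ) *ᵥ v = c • v}
  mul_mem' := by
    rintro U V ⟨hUΩ, c, hc, hUv⟩ ⟨hVΩ, d, hd, hVv⟩
    refine ⟨?_, c * d, mul_pos hc hd, ?_⟩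
    · have hcomp : ((U * V : GL n ℝ) : Matrix n n ℝ).mulVec =
          (U : Matrix n n ℝ).mulVec ∘ (V : Matrix n n ℝ).mulVec :=
        funext fun x => by simp [mulVec_mulVec]
      rw [hcomp, Set.image_comp, hVΩ, hUΩ]
    · rw [Units.val_mul, ← mulVec_mulVec, hVv, mulVec_smul, hUv, smul_smul, mul_comm]
  one_mem' := ⟨by simp, 1, one_pos, by simp⟩
  inv_mem' := by
    rintro U ⟨hUΩ, c, hc, hUv⟩
    have hinv : ∀ x, ((U⁻¹ : GL n ℝ) : Matrix n n ℝ) *ᵥ ((U : Matrix n n ℝ) *ᵥ x) = x :=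
      fun x => by rw [mulVec_mulVec, ← Units.val_mul, inv_mul_cancel, Units.val_one, one_mulVec]
    refine ⟨?_, c⁻¹, inv_pos.mpr hc, ?_⟩
    · conv_lhs => rw [← hUΩ]
      simp only [Set.image_image, hinv, Set.image_id']
    · calc ((U⁻¹ : GL n ℝ) : Matrix n n ℝ) *ᵥ v
          = c⁻¹ • ((U⁻¹ : GL n ℝ) : Matrix n n ℝ) *ᵥ (c • v) := by
            rw [mulVec_smul, inv_smul_smul₀ hc.ne']
        _ = c⁻¹ • v := by rw [← hUv, hinv]

theorem image_eq_of_forall_mulVec_mem_iff {Ω : Set (n → ℝ)} (U : GL n ℝ)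
    (h : ∀ x, (U : Matrix n n ℝ) *ᵥ x ∈ Ω ↔ x ∈ Ω) :
    (U : Matrix n n ℝ).mulVec '' Ω = Ω := by
  have hpre : (U : Matrix n n ℝ).mulVec ⁻¹' Ω = Ω := Set.ext h
  conv_lhs => rw [← hpre]
  exact Set.image_preimage_eq Ω (mulVec_surjective_iff_isUnit.mpr U.isUnit)

end RayConeStabilizer

section LorentzCone

def lorentzCone : Set (Fin 3 → ℝ) := {x | x 1 ^ 2 + x 2 ^ 2 < x 0 ^ 2 ∧ 0 < x 0}

def lorentzForm (x : Fin 3 → ℝ) : ℝ := x 0 ^ 2 - x 1 ^ 2 - x 2 ^ 2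

theorem mem_lorentzCone_iff {x : Fin 3 → ℝ} :
    x ∈ lorentzCone ↔ 0 < lorentzForm x ∧ 0 < x 0 - x 1 := by
  simp only [lorentzCone, lorentzForm, Set.mem_ofPred_eq]
  constructor
  · rintro ⟨hQ, h0⟩
    exact ⟨by linarith, by nlinarith [sq_nonneg (x 2), sq_nonneg (x 0 + x 1)]⟩
  · rintro ⟨hQ, hu⟩
    exact ⟨by linarith, by nlinarith [sq_nonneg (x 2), sq_nonneg (x 0 + x 1)]⟩

theorem mulVec_mem_lorentzCone_iff {A : Matrix (Fin 3) (Fin 3) ℝ} {α β : ℝ} (hα : 0 < α)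
    (hβ : 0 < β) (hQ : ∀ x, lorentzForm (A *ᵥ x) = α * lorentzForm x)
    (hu : ∀ x, (A *ᵥ x) 0 - (A *ᵥ x) 1 = β * (x 0 - x 1)) (x : Fin 3 → ℝ) :
    A *ᵥ x ∈ lorentzCone ↔ x ∈ lorentzCone := by
  rw [mem_lorentzCone_iff, mem_lorentzCone_iff, hQ, hu, mul_pos_iff_of_pos_left hα,
    mul_pos_iff_of_pos_left hβ]

theorem lorentzForm_smul (c : ℝ) (x : Fin 3 → ℝ) :
    lorentzForm (c • x) = c ^ 2 * lorentzForm x := by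
  simp only [lorentzForm, Fin.isValue, Pi.smul_apply, smul_eq_mul]
  ring

noncomputable def nullRotation (a : ℝ) : Matrix (Fin 3) (Fin 3) ℝ :=
  !![1 + a ^ 2 / 2, -(a ^ 2 / 2), a; a ^ 2 / 2, 1 - a ^ 2 / 2, a; a, -a, 1]

noncomputable def lorentzBoost (s : ℝ) : Matrix (Fin 3) (Fin 3) ℝ :=
  !![Real.cosh s, Real.sinh s, 0; Real.sinh s, Real.cosh s, 0; 0, 0, 1]

theorem nullRotation_mulVec (a : ℝ) (x : Fin 3 → ℝ) :
    nullRotation a *ᵥ x = ![x 0 + a * x 2 + a ^ 2 / 2 * (x 0 - x 1),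
      x 1 + a * x 2 + a ^ 2 / 2 * (x 0 - x 1), x 2 + a * (x 0 - x 1)] := by
  ext i
  fin_cases i <;>
    simp only [nullRotation, mulVec, dotProduct, Fin.sum_univ_three, of_apply, cons_val',
      cons_val_fin_one, Fin.isValue, Fin.zero_eta, Fin.mk_one, Fin.reduceFinMk, cons_val_zero,
      cons_val_one, cons_val] <;>
    ring

theorem lorentzBoost_mulVec (s : ℝ) (x : Fin 3 → ℝ) :
    lorentzBoost s *ᵥ x = ![Real.cosh s * x 0 + Real.sinh s * x 1,
      Real.sinh s * x 0 + Real.cosh s * x 1, x 2] := by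
  ext i
  fin_cases i <;> simp [lorentzBoost, mulVec, dotProduct, Fin.sum_univ_three]

theorem det_nullRotation (a : ℝ) : (nullRotation a).det = 1 := by
  simp only [nullRotation, det_fin_three, of_apply, cons_val', cons_val_fin_one, Fin.isValue,
    cons_val_zero, cons_val_one, cons_val]
  ring

theorem det_lorentzBoost (s : ℝ) : (lorentzBoost s).det = 1 := by
  simp [lorentzBoost, det_fin_three, ← sq, Real.cosh_sq_sub_sinh_sq]

theorem lorentzForm_nullRotation_mulVec (a : ℝ) (x : Fin 3 → ℝ) :
    lorentzForm (nullRotation a *ᵥ x) = lorentzForm x := by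
  simp only [lorentzForm, nullRotation_mulVec, Fin.isValue, cons_val_zero, cons_val_one,
    cons_val]
  ring

theorem lorentzForm_lorentzBoost_mulVec (s : ℝ) (x : Fin 3 → ℝ) :
    lorentzForm (lorentzBoost s *ᵥ x) = lorentzForm x := by
  simp only [lorentzForm, lorentzBoost_mulVec, Fin.isValue, cons_val_zero, cons_val_one,
    cons_val]
  linear_combination (x 0 ^ 2 - x 1 ^ 2) * Real.cosh_sq_sub_sinh_sq s

theorem nullRotation_mulVec_sub (a : ℝ) (x : Fin 3 → ℝ) :
    (nullRotation a *ᵥ x) 0 - (nullRotation a *ᵥ x) 1 = x 0 - x 1 := by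
  simp [nullRotation_mulVec]

theorem lorentzBoost_mulVec_sub (s : ℝ) (x : Fin 3 → ℝ) :
    (lorentzBoost s *ᵥ x) 0 - (lorentzBoost s *ᵥ x) 1 = Real.exp (-s) * (x 0 - x 1) := by
  simp only [lorentzBoost_mulVec, Fin.isValue, cons_val_zero, cons_val_one,
    ← Real.cosh_sub_sinh]
  ring

theorem nullRotation_mulVec_null (a : ℝ) : nullRotation a *ᵥ ![1, 1, 0] = ![1, 1, 0] := by
  simp [nullRotation_mulVec]

theorem lorentzBoost_mulVec_null (s : ℝ) :
    lorentzBoost s *ᵥ ![1, 1, 0] = Real.exp s • ![1, 1, 0] := by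
  simp [lorentzBoost_mulVec, ← Real.cosh_add_sinh, add_comm]

noncomputable def nullRotationGL (a : ℝ) : GL (Fin 3) ℝ :=
  GeneralLinearGroup.mkOfDetNeZero (nullRotation a) (by simp [det_nullRotation])

noncomputable def lorentzBoostGL (s : ℝ) : GL (Fin 3) ℝ :=
  GeneralLinearGroup.mkOfDetNeZero (lorentzBoost s) (by simp [det_lorentzBoost])

@[simp]
theorem coe_nullRotationGL (a : ℝ) :
    (nullRotationGL a : Matrix (Fin 3) (Fin 3) ℝ) = nullRotation a := rfl

@[simp]
theorem coe_lorentzBoostGL (s : ℝ) :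
    (lorentzBoostGL s : Matrix (Fin 3) (Fin 3) ℝ) = lorentzBoost s := rfl

theorem nullRotationGL_mem_rayConeStabilizer (a : ℝ) :
    nullRotationGL a ∈ rayConeStabilizer lorentzCone ![1, 1, 0] :=
  ⟨image_eq_of_forall_mulVec_mem_iff _ <| mulVec_mem_lorentzCone_iff one_pos one_pos
      (by simp [lorentzForm_nullRotation_mulVec]) (by simp [nullRotation_mulVec_sub]),
    1, one_pos, by simp [nullRotation_mulVec_null]⟩

theorem lorentzBoostGL_mem_rayConeStabilizer (s : ℝ) :
    lorentzBoostGL s ∈ rayConeStabilizer lorentzCone ![1, 1, 0] :=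
  ⟨image_eq_of_forall_mulVec_mem_iff _ <| mulVec_mem_lorentzCone_iff one_pos (Real.exp_pos (-s))
      (by simp [lorentzForm_lorentzBoost_mulVec]) (by simp [lorentzBoost_mulVec_sub]),
    Real.exp s, Real.exp_pos s, by simp [lorentzBoost_mulVec_null]⟩

theorem scalar_mem_rayConeStabilizer {c : ℝ} (hc : 0 < c) :
    GeneralLinearGroup.scalar (Fin 3) (Units.mk0 c hc.ne') ∈
      rayConeStabilizer lorentzCone ![1, 1, 0] := by
  have hmul : ∀ x, ((GeneralLinearGroup.scalar (Fin 3) (Units.mk0 c hc.ne') : GL (Fin 3) ℝ) :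
      Matrix (Fin 3) (Fin 3) ℝ) *ᵥ x = c • x := fun x => by
    simp [GeneralLinearGroup.coe_scalar]
  refine ⟨image_eq_of_forall_mulVec_mem_iff _ (mulVec_mem_lorentzCone_iff (pow_pos hc 2) hc
    (fun x => ?_) (fun x => ?_)), c, hc, hmul _⟩
  · rw [hmul, lorentzForm_smul]
  · simp only [hmul, Pi.smul_apply, smul_eq_mul, mul_sub]

theorem exists_mem_rayConeStabilizer_mulVec_basepoint_eq {x : Fin 3 → ℝ}
    (hx : x ∈ lorentzCone) :
    ∃ U ∈ rayConeStabilizer lorentzCone ![1, 1, 0],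
      (U : Matrix (Fin 3) (Fin 3) ℝ) *ᵥ ![1, 0, 0] = x := by
  obtain ⟨hQ, hu⟩ := mem_lorentzCone_iff.mp hx
  -- scale `e₀` to Lorentz norm `c`, boost until `x₀ - x₁` matches, then shear `x₂` into place
  set u := x 0 - x 1 with hu_def
  set c := √(lorentzForm x)
  have hc : 0 < c := Real.sqrt_pos.mpr hQ
  have hc2 : c ^ 2 = x 0 ^ 2 - x 1 ^ 2 - x 2 ^ 2 := Real.sq_sqrt hQ.le
  set s := Real.log (c / u)
  have hexp : Real.exp s = c / u := Real.exp_log (div_pos hc hu)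
  have hexp' : Real.exp (-s) = u / c := by rw [Real.exp_neg, hexp, inv_div]
  refine ⟨nullRotationGL (x 2 / u) * lorentzBoostGL s *
      GeneralLinearGroup.scalar (Fin 3) (Units.mk0 c hc.ne'),
    mul_mem (mul_mem (nullRotationGL_mem_rayConeStabilizer _)
      (lorentzBoostGL_mem_rayConeStabilizer _)) (scalar_mem_rayConeStabilizer hc), ?_⟩
  simp only [Units.val_mul, ← mulVec_mulVec, coe_nullRotationGL, coe_lorentzBoostGL,
    GeneralLinearGroup.coe_scalar, Units.val_mk0, scalar_apply, diagonal_const_mulVec, smul_cons,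
    smul_eq_mul, mul_one, mul_zero, smul_empty, lorentzBoost_mulVec, nullRotation_mulVec,
    cons_val_zero, cons_val_one, cons_val, add_zero, zero_add]
  rw [Real.cosh_eq, Real.sinh_eq, hexp, hexp']
  ext i
  fin_cases i <;>
    simp only [Fin.isValue, Fin.zero_eta, Fin.mk_one, Fin.reduceFinMk, cons_val_zero,
      cons_val_one, cons_val] <;>
    field_simp <;> rw [hu_def]
  · linear_combination 2 * (x 0 - x 1) ^ 2 * hc2
  · linear_combination 2 * (x 0 - x 1) ^ 2 * hc2
  · ring

theorem exists_mem_rayConeStabilizer_mulVec_eq_of_mem {x y : Fin 3 → ℝ}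
    (hx : x ∈ lorentzCone) (hy : y ∈ lorentzCone) :
    ∃ U ∈ rayConeStabilizer lorentzCone ![1, 1, 0], (U : Matrix (Fin 3) (Fin 3) ℝ) *ᵥ x = y := by
  obtain ⟨U, hU, rfl⟩ := exists_mem_rayConeStabilizer_mulVec_basepoint_eq hx
  obtain ⟨V, hV, rfl⟩ := exists_mem_rayConeStabilizer_mulVec_basepoint_eq hy
  refine ⟨V * U⁻¹, mul_mem hV (inv_mem hU), ?_⟩
  rw [mulVec_mulVec, Units.val_mul, mul_assoc, ← Units.val_mul, inv_mul_cancel, Units.val_one,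
    mul_one]

def rayConeStabilizerLie : (Fin 3 → ℝ) →ₗ[ℝ] Matrix (Fin 3) (Fin 3) ℝ where
  toFun c := !![c 0, c 1, c 2; c 1, c 0, c 2; c 2, -c 2, c 0]
  map_add' c d := by ext i j; fin_cases i <;> fin_cases j <;> simp [add_comm]
  map_smul' a c := by ext i j; fin_cases i <;> fin_cases j <;> simp

theorem rayConeStabilizerLie_injective : Function.Injective rayConeStabilizerLie := by
  intro c d h
  ext i
  fin_cases i
  exacts [congrFun (congrFun h 0) 0, congrFun (congrFun h 0) 1, congrFun (congrFun h 0) 2]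

theorem finrank_range_rayConeStabilizerLie :
    Module.finrank ℝ (LinearMap.range rayConeStabilizerLie) = 3 := by
  rw [LinearMap.finrank_range_of_inj rayConeStabilizerLie_injective, Module.finrank_fin_fun]

theorem exists_mulVec_null_eq_smul_iff (lam p q r : ℝ) :
    (∃ μ : ℝ, !![lam, p, q; p, lam, r; q, -r, lam] *ᵥ ![1, 1, 0] = μ • ![1, 1, 0]) ↔ q = r := by
  constructor
  · rintro ⟨μ, h⟩
    have h2 : q + -r = 0 := by simpa using congrFun h 2
    linarith
  · rintro rfl
    exact ⟨lam + p, by ext i; fin_cases i <;> simp [add_comm]⟩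

theorem setOf_derivation_eq_range_rayConeStabilizerLie :
    {A : Matrix (Fin 3) (Fin 3) ℝ | (∃ lam p q r : ℝ, A = !![lam, p, q; p, lam, r; q, -r, lam]) ∧
      ∃ B : Matrix (Fin 2) (Fin 2) ℂ, ∀ w w' : Fin 2 → ℂ,
        (fun l => ∑ i, (A l i : ℂ) * rankOneHermitianForm ![1, 1, 0] w w' i) =
          rankOneHermitianForm ![1, 1, 0] (B *ᵥ w) w' +
            rankOneHermitianForm ![1, 1, 0] w (B *ᵥ w')} =
      Set.range rayConeStabilizerLie := by
  ext A
  simp only [Set.mem_ofPred_eq, exists_derivation_iff_mulVec_eq_smul, Set.mem_range]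
  constructor
  · rintro ⟨⟨lam, p, q, r, rfl⟩, hv⟩
    obtain rfl := (exists_mulVec_null_eq_smul_iff lam p q r).mp hv
    exact ⟨![lam, p, q], rfl⟩
  · rintro ⟨c, rfl⟩
    exact ⟨⟨c 0, c 1, c 2, c 2, rfl⟩, (exists_mulVec_null_eq_smul_iff _ _ _ _).mpr rfl⟩

end LorentzCone

/-- For the Lorentz cone `Ω₃ ⊆ ℝ³` and the Hermitian form
`H(w,w') = (1,1,0)·(∑ conj(wⱼ)w'ⱼ)` on `ℂ²`, the group `G(Ω₃, H)` has
dimension 3 (its Lie algebra, described infinitesimally, has dimension 3) and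
acts transitively on `Ω₃`. -/
theorem stmt_15 (Ω₃ : Set (Fin 3 → ℝ))
    (hΩ₃ : Ω₃ = {x | (x 1) ^ 2 + (x 2) ^ 2 < (x 0) ^ 2 ∧ 0 < x 0})
    (Hf : (Fin 2 → ℂ) → (Fin 2 → ℂ) → (Fin 3 → ℂ))
    (hHf : Hf = fun w w' => ![∑ j, (starRingEnd ℂ) (w j) * w' j,
      ∑ j, (starRingEnd ℂ) (w j) * w' j, 0])
    (G : Set (Matrix (Fin 3) (Fin 3) ℝ))
    (hG : G = {A | IsUnit A ∧ A.mulVec '' Ω₃ = Ω₃ ∧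
      ∃ B : Matrix (Fin 2) (Fin 2) ℂ, IsUnit B ∧ ∀ w w' : Fin 2 → ℂ,
        (fun l => ∑ i, (A l i : ℂ) * Hf w w' i) = Hf (B.mulVec w) (B.mulVec w')})
    (g : Set (Matrix (Fin 3) (Fin 3) ℝ))
    (hg : g = {A | (∃ lam p q r : ℝ, A = !![lam, p, q; p, lam, r; q, -r, lam]) ∧
      ∃ B : Matrix (Fin 2) (Fin 2) ℂ, ∀ w w' : Fin 2 → ℂ,
        (fun l => ∑ i, (A l i : ℂ) * Hf w w' i)
          = Hf (B.mulVec w) w' + Hf w (B.mulVec w')}) :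
    Module.finrank ℝ (Submodule.span ℝ g) = 3 ∧
    ∀ x ∈ Ω₃, ∀ y ∈ Ω₃, ∃ A ∈ G, A.mulVec x = y := by
  subst hΩ₃ hG hg
  have hH : Hf = rankOneHermitianForm ![1, 1, 0] := by
    subst hHf
    funext w w' i
    fin_cases i <;> simp [rankOneHermitianForm, dotProduct]
  subst hH
  refine ⟨?_, fun x hx y hy => ?_⟩
  · rw [setOf_derivation_eq_range_rayConeStabilizerLie, ← LinearMap.coe_range, Submodule.span_eq,
      finrank_range_rayConeStabilizerLie]
  · obtain ⟨U, ⟨hUΩ, c, hc, hUv⟩, rfl⟩ := exists_mem_rayConeStabilizer_mulVec_eq_of_mem hx hy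
    exact ⟨U, ⟨U.isUnit, hUΩ, exists_isUnit_of_mulVec_eq_smul hc hUv⟩, rfl⟩
end
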